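/- If the underlying precedence on a finite set of function symbols is a total well-quasi-ordering, then the recursive path quasi-ordering ≥_RPQO is thin: for every ground term t, the set of ground terms u with u ≈ t (i.e., u ≥ t and t ≥ u) is finite. -/

import Mathlib

attribute [local instance] Classical.propDecidable

/-- Ground terms over a signature `F` with arity function `ar`. -/
inductive GTerm (F : Type) (ar : F → ℕ) : Type where
  | mk (f : F) (args : Fin (ar f) → GTerm F ar) : GTerm F ar

/-- The weight of a term: `w(f(t₁,…,tₙ)) = w(f) + Σ w(tᵢ)`. -/
def weightOf {F : Type} {ar : F → ℕ} (w : F → ℕ) : GTerm F ar → ℕ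
  | .mk f args => w f + ∑ i : Fin (ar f), weightOf w (args i)

/-- The derived multiset quasi-ordering of a relation `r`: `T ≥ U` iff `U = ∅`,
or some `t ∈ T` and `u ∈ U` are `≈`-equal (in both directions of `r`) and
`T − t ≥ U − u`, or some `t ∈ T` satisfies `T − t ≥ U` minus all elements
strictly below `t`. -/
inductive MulGE {α : Type} (r : α → α → Prop) : Multiset α → Multiset α → Prop where
  | empty (T : Multiset α) : MulGE r T 0
  | cancel {T U : Multiset α} (t u : α) (ht : t ∈ T) (hu : u ∈ U)
      (h1 : r t u) (h2 : r u t) (h : MulGE r (T.erase t) (U.erase u)) : MulGE r T U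
  | dominate {T U : Multiset α} (t : α) (ht : t ∈ T)
      (h : MulGE r (T.erase t) (U.filter (fun u => ¬ (r t u ∧ ¬ r u t)))) : MulGE r T U

/-- Size of a term (number of function symbol occurrences). -/
def tsize {F : Type} {ar : F → ℕ} : GTerm F ar → ℕ
  | .mk f args => 1 + ∑ i : Fin (ar f), tsize (args i)

/-- Strict part of the derived multiset ordering. -/
def MulGT {α : Type} (r : α → α → Prop) (T U : Multiset α) : Prop :=
  MulGE r T U ∧ ¬ MulGE r U T

/-- Strict part of the precedence. -/
def strictF {F : Type} (ge : F → F → Prop) (f g : F) : Prop := ge f g ∧ ¬ ge g f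

/-- Equivalence part of the precedence. -/
def equivF {F : Type} (ge : F → F → Prop) (f g : F) : Prop := ge f g ∧ ge g f

/-- The multiset of arguments of a term. -/
def argsM {F : Type} {ar : F → ℕ} {f : F} (args : Fin (ar f) → GTerm F ar) :
    Multiset (GTerm F ar) := (List.ofFn args : List (GTerm F ar))

/-- Fuelled recursive path quasi-ordering: `f(t₁,…,tₘ) ≥ g(u₁,…,uₙ)` iff
(1) `f >_F g` and `{f(ts)} >_mul {us}`, or (2) `g >_F f` and `{ts} ≥_mul {g(us)}`,
or (3) `f ≈_F g` and `{ts} ≥_mul {us}`.  Since each recursive comparison strictly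
decreases the total size of the compared pair, the fuel `tsize t + tsize u` used
in `RPQO` below makes this the exact recursive path quasi-ordering. -/
def RPQOf {F : Type} {ar : F → ℕ} (ge : F → F → Prop) :
    ℕ → GTerm F ar → GTerm F ar → Prop
  | 0, _, _ => False
  | n + 1, .mk f ts, .mk g us =>
      (strictF ge f g ∧ MulGT (RPQOf ge n) {GTerm.mk f ts} (argsM us)) ∨
      (strictF ge g f ∧ MulGE (RPQOf ge n) (argsM ts) {GTerm.mk g us}) ∨
      (equivF ge f g ∧ MulGE (RPQOf ge n) (argsM ts) (argsM us))

/-- The recursive path quasi-ordering derived from the precedence `ge`. -/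
def RPQO {F : Type} {ar : F → ℕ} (ge : F → F → Prop) (t u : GTerm F ar) : Prop :=
  RPQOf ge (tsize t + tsize u) t u

/-!
Both `RPQO ge u t` and `RPQO ge t u` can hold only through the clause for equivalent head
symbols, so the argument multisets of `u` and `t` dominate each other in the multiset extension.
By induction on sizes, the recursive path quasi-ordering is reflexive, transitive and total, and
for a total preorder two multisets that dominate each other are matched element by element by
equivalent pairs (cancel a maximal element on both sides and recurse). Hence every argument of a
term equivalent to `t` is equivalent to an argument of `t`: by induction on `t`, the class of `t`
consists of terms built from one of the finitely many function symbols and arguments taken from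
the finitely many classes of the arguments of `t`.
-/

section MulGE

variable {α : Type} {r r' : α → α → Prop}

theorem MulGE.exists_rel {T U : Multiset α} (h : MulGE r T U) :
    ∀ u ∈ U, ∃ t ∈ T, r t u := by
  induction h with
  | empty => simp
  | cancel t u ht _ htu _ _ ih =>
    intro v hv
    by_cases hvu : v = u
    · exact ⟨t, ht, hvu ▸ htu⟩
    · obtain ⟨t', ht', h'⟩ := ih v ((Multiset.mem_erase_of_ne hvu).2 hv)
      exact ⟨t', Multiset.mem_of_mem_erase ht', h'⟩
  | dominate t ht _ ih =>
    intro v hv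
    by_cases htv : strictF r t v
    · exact ⟨t, ht, htv.1⟩
    · obtain ⟨t', ht', h'⟩ := ih v (Multiset.mem_filter_of_mem hv htv)
      exact ⟨t', Multiset.mem_of_mem_erase ht', h'⟩

theorem mulGE_of_forall_strictF {T U : Multiset α} {t : α} (ht : t ∈ T)
    (H : ∀ u ∈ U, strictF r t u) : MulGE r T U := by
  refine .dominate t ht ?_
  rw [Multiset.filter_eq_nil.2 fun u hu hn => hn (H u hu)]
  exact .empty _

theorem mulGE_singleton_right_iff {T : Multiset α} {c : α} :
    MulGE r T {c} ↔ ∃ t ∈ T, r t c := by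
  refine ⟨fun h => h.exists_rel c (Multiset.mem_singleton_self c), fun ⟨t, ht, htc⟩ => ?_⟩
  by_cases hct : r c t
  · exact .cancel t c ht (Multiset.mem_singleton_self c) htc hct (by simpa using .empty _)
  · exact mulGE_of_forall_strictF ht fun u hu => Multiset.mem_singleton.1 hu ▸ ⟨htc, hct⟩

theorem mulGT_singleton_left_iff {a : α} {U : Multiset α} :
    MulGT r {a} U ↔ ∀ u ∈ U, strictF r a u := by
  refine ⟨fun h u hu => ⟨?_, fun hua => h.2 (mulGE_singleton_right_iff.2 ⟨u, hu, hua⟩)⟩,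
    fun H => ⟨mulGE_of_forall_strictF (Multiset.mem_singleton_self a) H, fun h => ?_⟩⟩
  · simpa using h.1.exists_rel u hu
  · obtain ⟨u, hu, hua⟩ := mulGE_singleton_right_iff.1 h
    exact (H u hu).2 hua

theorem mulGE_refl {T : Multiset α} (H : ∀ x ∈ T, r x x) : MulGE r T T := by
  induction T using Multiset.induction with
  | empty => exact .empty _
  | cons a T ih =>
    refine .cancel a a (Multiset.mem_cons_self a T) (Multiset.mem_cons_self a T)
      (H a (Multiset.mem_cons_self a T)) (H a (Multiset.mem_cons_self a T)) ?_
    rw [Multiset.erase_cons_head]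
    exact ih fun x hx => H x (Multiset.mem_cons_of_mem hx)

theorem MulGE.congr {T U : Multiset α} (h : MulGE r T U)
    (H : ∀ x ∈ T, ∀ y ∈ U, (r x y ↔ r' x y) ∧ (r y x ↔ r' y x)) : MulGE r' T U := by
  induction h with
  | empty => exact .empty _
  | cancel t u ht hu htu hut _ ih =>
    exact .cancel t u ht hu ((H t ht u hu).1.1 htu) ((H t ht u hu).2.1 hut) <| ih fun x hx y hy =>
      H x (Multiset.mem_of_mem_erase hx) y (Multiset.mem_of_mem_erase hy)
  | @dominate T U t ht _ ih =>
    have hfilter : U.filter (fun u => ¬ (r t u ∧ ¬ r u t)) =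
        U.filter (fun u => ¬ (r' t u ∧ ¬ r' u t)) :=
      Multiset.filter_congr fun u hu => by simp only [(H t ht u hu).1, (H t ht u hu).2]
    refine .dominate t ht ?_
    rw [← hfilter]
    exact ih fun x hx y hy =>
      H x (Multiset.mem_of_mem_erase hx) y (Multiset.mem_of_le (Multiset.filter_le _ _) hy)

theorem mulGE_congr_iff {T U : Multiset α}
    (H : ∀ x ∈ T, ∀ y ∈ U, (r x y ↔ r' x y) ∧ (r y x ↔ r' y x)) :
    MulGE r T U ↔ MulGE r' T U :=
  ⟨fun h => h.congr H, fun h => h.congr fun x hx y hy =>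
    ⟨(H x hx y hy).1.symm, (H x hx y hy).2.symm⟩⟩

end MulGE

section Decomp

variable {α : Type} {r : α → α → Prop}

theorem Multiset.Rel.exists_erase_of_mem_right {s : α → α → Prop} {M N : Multiset α}
    (h : Multiset.Rel s M N) {b : α} (hb : b ∈ N) :
    ∃ a ∈ M, s a b ∧ Multiset.Rel s (M.erase a) (N.erase b) := by
  rw [← Multiset.cons_erase hb] at h
  obtain ⟨a, M', hab, hrel, rfl⟩ := Multiset.rel_cons_right.1 h
  exact ⟨a, Multiset.mem_cons_self a M', hab, by rwa [Multiset.erase_cons_head]⟩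

-- The non-recursive form of `MulGE`.
def MulGEDecomp (r : α → α → Prop) (T₁ T₂ U₁ U₂ : Multiset α) : Prop :=
  Multiset.Rel (equivF r) T₁ U₁ ∧ ∀ u ∈ U₂, ∃ t ∈ T₂, strictF r t u

theorem mulGE_of_forall_exists_strictF {T U : Multiset α}
    (H : ∀ u ∈ U, ∃ t ∈ T, strictF r t u) : MulGE r T U := by
  induction T using Multiset.induction generalizing U with
  | empty =>
    obtain rfl : U = 0 := Multiset.eq_zero_of_forall_notMem fun u hu => by simpa using H u hu
    exact .empty _
  | cons a T ih =>
    refine .dominate a (Multiset.mem_cons_self a T) ?_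
    rw [Multiset.erase_cons_head]
    refine ih fun u hu => ?_
    obtain ⟨hu, hau⟩ := Multiset.mem_filter.1 hu
    obtain ⟨t, ht, htu⟩ := H u hu
    rcases Multiset.mem_cons.1 ht with rfl | ht
    · exact absurd htu hau
    · exact ⟨t, ht, htu⟩

theorem MulGEDecomp.mulGE {T₁ T₂ U₁ U₂ : Multiset α} (h : MulGEDecomp r T₁ T₂ U₁ U₂) :
    MulGE r (T₁ + T₂) (U₁ + U₂) := by
  obtain ⟨hrel, hdom⟩ := h
  induction hrel with
  | zero => simpa using mulGE_of_forall_exists_strictF hdom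
  | @cons t u T₁ U₁ htu _ ih =>
    refine .cancel t u (by simp) (by simp) htu.1 htu.2 ?_
    simpa [Multiset.cons_add] using ih

theorem MulGE.exists_decomp {T U : Multiset α} (h : MulGE r T U) :
    ∃ T₁ T₂ U₁ U₂, T = T₁ + T₂ ∧ U = U₁ + U₂ ∧ MulGEDecomp r T₁ T₂ U₁ U₂ := by
  induction h with
  | empty T => exact ⟨0, T, 0, 0, by simp, by simp, Multiset.Rel.zero, by simp⟩
  | cancel t u ht hu htu hut _ ih =>
    obtain ⟨T₁, T₂, U₁, U₂, hT, hU, hrel, hdom⟩ := ih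
    refine ⟨t ::ₘ T₁, T₂, u ::ₘ U₁, U₂, ?_, ?_, hrel.cons ⟨htu, hut⟩, hdom⟩
    · rw [← Multiset.cons_erase ht, hT, Multiset.cons_add]
    · rw [← Multiset.cons_erase hu, hU, Multiset.cons_add]
  | @dominate T U t ht _ ih =>
    obtain ⟨T₁, T₂, U₁, U₂, hT, hU, hrel, hdom⟩ := ih
    refine ⟨T₁, t ::ₘ T₂, U₁, U₂ + U.filter (fun u => r t u ∧ ¬ r u t), ?_, ?_, hrel, ?_⟩
    · rw [← Multiset.cons_erase ht, hT, Multiset.add_cons]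
    · rw [← add_assoc, ← hU, add_comm]
      exact (Multiset.filter_add_not (fun u => r t u ∧ ¬ r u t) U).symm
    · intro u hu
      rcases Multiset.mem_add.1 hu with hu | hu
      · obtain ⟨t', ht', htu⟩ := hdom u hu
        exact ⟨t', Multiset.mem_cons_of_mem ht', htu⟩
      · exact ⟨t, Multiset.mem_cons_self t T₂, (Multiset.mem_filter.1 hu).2⟩

end Decomp

section Trans

variable {α : Type} {r : α → α → Prop}

-- Transitivity along every ordering of `a, b, c`, phrased through the multiset `{a, b, c}` so
-- that a bound on the total size of `a, b, c` covers every ordering at once.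
def TransOnTriple (r : α → α → Prop) (a b c : α) : Prop :=
  ∀ x y z, ({x, y, z} : Multiset α) = {a, b, c} → r x y → r y z → r x z

theorem transOnTriple_of_trans (htr : ∀ x y z, r x y → r y z → r x z) {a b c : α} :
    TransOnTriple r a b c :=
  fun x y z _ => htr x y z

namespace TransOnTriple

variable {a b c : α} (h : TransOnTriple r a b c)
include h

theorem equivF_trans (hab : equivF r a b) (hbc : equivF r b c) : equivF r a c :=
  ⟨h a b c rfl hab.1 hbc.1,
    h c b a (by simp only [Multiset.insert_eq_cons, ← Multiset.singleton_add]; abel) hbc.2 hab.2⟩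

theorem strictF_of_strictF_of_rel (hab : strictF r a b) (hbc : r b c) : strictF r a c :=
  ⟨h a b c rfl hab.1 hbc, fun hca => hab.2 <|
    h b c a (by simp only [Multiset.insert_eq_cons, ← Multiset.singleton_add]; abel) hbc hca⟩

theorem strictF_of_rel_of_strictF (hab : r a b) (hbc : strictF r b c) : strictF r a c :=
  ⟨h a b c rfl hab hbc.1, fun hca => hbc.2 <|
    h c a b (by simp only [Multiset.insert_eq_cons, ← Multiset.singleton_add]; abel) hca hab⟩

end TransOnTriple

theorem MulGEDecomp.mem_right_cases {A₁ A₂ B₁ B₂ : Multiset α} {b : α}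
    (h : MulGEDecomp r A₁ A₂ B₁ B₂) (hb : b ∈ B₁ + B₂) :
    (∃ a ∈ A₁, equivF r a b ∧ MulGEDecomp r (A₁.erase a) A₂ (B₁.erase b) B₂ ∧
      (B₁ + B₂).erase b = B₁.erase b + B₂) ∨
    (∃ a ∈ A₂, strictF r a b ∧ MulGEDecomp r A₁ A₂ B₁ (B₂.erase b) ∧
      (B₁ + B₂).erase b = B₁ + B₂.erase b) := by
  obtain ⟨hrel, hdom⟩ := h
  rcases Multiset.mem_add.1 hb with hb | hb
  · obtain ⟨a, ha, hab, hrel'⟩ := hrel.exists_erase_of_mem_right hb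
    exact .inl ⟨a, ha, hab, ⟨hrel', hdom⟩, Multiset.erase_add_left_pos _ hb⟩
  · obtain ⟨a, ha, hab⟩ := hdom b hb
    exact .inr ⟨a, ha, hab, ⟨hrel, fun u hu => hdom u (Multiset.mem_of_mem_erase hu)⟩,
      Multiset.erase_add_right_pos _ hb⟩

theorem MulGEDecomp.mono {T₁ T₂ T₂' U₁ U₂ : Multiset α} (h : MulGEDecomp r T₁ T₂ U₁ U₂)
    (hle : T₂ ≤ T₂') : MulGEDecomp r T₁ T₂' U₁ U₂ :=
  ⟨h.1, fun u hu => (h.2 u hu).imp fun _ ⟨ht, htu⟩ => ⟨Multiset.mem_of_le hle ht, htu⟩⟩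

theorem MulGEDecomp.add_dominated {T₁ T₂ U₁ U₂ V : Multiset α} {t : α}
    (h : MulGEDecomp r T₁ T₂ U₁ U₂) (ht : t ∈ T₂) (H : ∀ u ∈ V, strictF r t u) :
    MulGEDecomp r T₁ T₂ U₁ (U₂ + V) :=
  ⟨h.1, fun u hu => (Multiset.mem_add.1 hu).elim (h.2 u) fun hu => ⟨t, ht, H u hu⟩⟩

def TransAcross (r : α → α → Prop) (A B C : Multiset α) : Prop :=
  ∀ a ∈ A, ∀ b ∈ B, ∀ c ∈ C, TransOnTriple r a b c

theorem TransAcross.mono {A B C A' B' C' : Multiset α} (h : TransAcross r A B C)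
    (hA : A' ⊆ A) (hB : B' ⊆ B) (hC : C' ⊆ C) : TransAcross r A' B' C' :=
  fun a ha b hb c hc => h a (hA ha) b (hB hb) c (hC hc)

-- Keeping `A₂` inside the dominating part is what lets an element of `C` that is dominated
-- through `B₂` be dominated from `A` as well.
def HasDecomp (r : α → α → Prop) (A₁ A₂ C : Multiset α) : Prop :=
  ∃ A₁' D C₁ C₂, A₁ = A₁' + D ∧ C = C₁ + C₂ ∧ MulGEDecomp r A₁' (D + A₂) C₁ C₂

namespace HasDecomp

variable {A₁ A₂ C V : Multiset α} {a : α}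

theorem cons_equivF (h : HasDecomp r (A₁.erase a) A₂ C) (ha : a ∈ A₁) {c : α}
    (hac : equivF r a c) : HasDecomp r A₁ A₂ (c ::ₘ C) := by
  obtain ⟨A₁', D, C₁, C₂, hA, rfl, hrel, hdom⟩ := h
  refine ⟨a ::ₘ A₁', D, c ::ₘ C₁, C₂, ?_, Multiset.cons_add c C₁ C₂ |>.symm, hrel.cons hac, hdom⟩
  rw [← Multiset.cons_erase ha, hA, Multiset.cons_add]

theorem add_of_mem_right (h : HasDecomp r A₁ A₂ C) (ha : a ∈ A₂)
    (hV : ∀ c ∈ V, strictF r a c) : HasDecomp r A₁ A₂ (C + V) := by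
  obtain ⟨A₁', D, C₁, C₂, hA, rfl, hAC⟩ := h
  exact ⟨A₁', D, C₁, C₂ + V, hA, add_assoc C₁ C₂ V,
    hAC.add_dominated (Multiset.mem_add.2 (.inr ha)) hV⟩

theorem add_of_mem_left (h : HasDecomp r (A₁.erase a) A₂ C) (ha : a ∈ A₁)
    (hV : ∀ c ∈ V, strictF r a c) : HasDecomp r A₁ A₂ (C + V) := by
  obtain ⟨A₁', D, C₁, C₂, hA, rfl, hAC⟩ := h
  refine ⟨A₁', a ::ₘ D, C₁, C₂ + V, ?_, add_assoc C₁ C₂ V, ?_⟩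
  · rw [← Multiset.cons_erase ha, hA, Multiset.add_cons]
  · rw [Multiset.cons_add]
    exact (hAC.mono (Multiset.le_cons_self _ a)).add_dominated (Multiset.mem_cons_self a _) hV

end HasDecomp

theorem MulGE.hasDecomp {B C : Multiset α} (h : MulGE r B C) {A₁ A₂ B₁ B₂ : Multiset α}
    (hB : B = B₁ + B₂) (hAB : MulGEDecomp r A₁ A₂ B₁ B₂) (htr : TransAcross r (A₁ + A₂) B C) :
    HasDecomp r A₁ A₂ C := by
  induction h generalizing A₁ A₂ B₁ B₂ with
  | empty => exact ⟨0, A₁, 0, 0, by simp, by simp, Multiset.Rel.zero, by simp⟩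
  | @cancel B C b c hb hc hbc hcb _ ih =>
    subst hB
    rw [← Multiset.cons_erase hc]
    rcases hAB.mem_right_cases hb with ⟨a, ha, hab, hAB', hB'⟩ | ⟨a, ha, hab, hAB', hB'⟩
    · have hac := (htr a (Multiset.mem_add.2 (.inl ha)) b hb c hc).equivF_trans hab ⟨hbc, hcb⟩
      refine (ih hB' hAB' (htr.mono ?_ (Multiset.erase_subset _ _) (Multiset.erase_subset _ _)))
        |>.cons_equivF ha hac
      exact Multiset.subset_of_le (add_le_add_left (Multiset.erase_le a A₁) A₂)
    · have hac := (htr a (Multiset.mem_add.2 (.inr ha)) b hb c hc).strictF_of_strictF_of_rel hab hbc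
      rw [← Multiset.singleton_add, add_comm]
      exact (ih hB' hAB' (htr.mono (Multiset.Subset.refl _) (Multiset.erase_subset _ _)
        (Multiset.erase_subset _ _))).add_of_mem_right ha (by simpa using hac)
  | @dominate B C b hb _ ih =>
    subst hB
    have hC :
        C = C.filter (fun u => ¬ (r b u ∧ ¬ r u b)) + C.filter (fun u => r b u ∧ ¬ r u b) := by
      rw [add_comm]
      exact (Multiset.filter_add_not (fun u => r b u ∧ ¬ r u b) C).symm
    have htrb : ∀ a ∈ A₁ + A₂, ∀ c ∈ C.filter (fun u => r b u ∧ ¬ r u b),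
        TransOnTriple r a b c ∧ strictF r b c := fun a ha c hc =>
      ⟨htr a ha b hb c (Multiset.mem_filter.1 hc).1, (Multiset.mem_filter.1 hc).2⟩
    rw [hC]
    rcases hAB.mem_right_cases hb with ⟨a, ha, hab, hAB', hB'⟩ | ⟨a, ha, hab, hAB', hB'⟩
    · refine (ih hB' hAB' (htr.mono ?_ (Multiset.erase_subset _ _) (Multiset.filter_subset _ _)))
        |>.add_of_mem_left ha fun c hc => ?_
      · exact Multiset.subset_of_le (add_le_add_left (Multiset.erase_le a A₁) A₂)
      obtain ⟨habc, hbc⟩ := htrb a (Multiset.mem_add.2 (.inl ha)) c hc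
      exact habc.strictF_of_rel_of_strictF hab.1 hbc
    · refine (ih hB' hAB' (htr.mono (Multiset.Subset.refl _) (Multiset.erase_subset _ _)
        (Multiset.filter_subset _ _))).add_of_mem_right ha fun c hc => ?_
      obtain ⟨habc, hbc⟩ := htrb a (Multiset.mem_add.2 (.inr ha)) c hc
      exact habc.strictF_of_strictF_of_rel hab hbc.1

theorem MulGE.trans {A B C : Multiset α} (hAB : MulGE r A B) (hBC : MulGE r B C)
    (htr : TransAcross r A B C) : MulGE r A C := by
  obtain ⟨A₁, A₂, B₁, B₂, rfl, hB, hAB⟩ := hAB.exists_decomp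
  obtain ⟨A₁', D, C₁, C₂, rfl, rfl, hAC⟩ := hBC.hasDecomp hB hAB htr
  simpa [add_assoc] using hAC.mulGE

end Trans

section Total

variable {α : Type} {r : α → α → Prop}

theorem Multiset.Rel.exists_erase_of_mem_left {s : α → α → Prop} {M N : Multiset α}
    (h : Multiset.Rel s M N) {a : α} (ha : a ∈ M) :
    ∃ b ∈ N, s a b ∧ Multiset.Rel s (M.erase a) (N.erase b) := by
  obtain ⟨b, hb, hab, hrel⟩ := (Multiset.rel_flip.2 h).exists_erase_of_mem_right ha
  exact ⟨b, hb, hab, Multiset.rel_flip.1 hrel⟩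

theorem Multiset.exists_forall_rel_of_total {M : Multiset α} (hM : M ≠ 0)
    (htot : ∀ x ∈ M, ∀ y ∈ M, r x y ∨ r y x) (htr : ∀ x y z, r x y → r y z → r x z) :
    ∃ m ∈ M, ∀ x ∈ M, r m x := by
  induction M using Multiset.induction with
  | empty => exact absurd rfl hM
  | cons a M ih =>
    have hsub : ∀ x ∈ M, x ∈ a ::ₘ M := fun x hx => Multiset.mem_cons_of_mem hx
    have haa : r a a :=
      (htot a (Multiset.mem_cons_self a M) a (Multiset.mem_cons_self a M)).elim id id
    rcases eq_or_ne M 0 with rfl | hM'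
    · exact ⟨a, Multiset.mem_cons_self a 0, fun x hx => by rwa [Multiset.mem_singleton.1 hx]⟩
    obtain ⟨m, hm, hmax⟩ := ih hM' fun x hx y hy => htot x (hsub x hx) y (hsub y hy)
    rcases htot m (hsub m hm) a (Multiset.mem_cons_self a M) with hma | ham
    · exact ⟨m, hsub m hm, fun x hx => (Multiset.mem_cons.1 hx).elim (· ▸ hma) (hmax x)⟩
    · exact ⟨a, Multiset.mem_cons_self a M, fun x hx =>
        (Multiset.mem_cons.1 hx).elim (· ▸ haa) fun hx => htr a m x ham (hmax x hx)⟩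

theorem mulGE_or_mulGE (htr : ∀ x y z, r x y → r y z → r x z) {A B : Multiset α}
    (htot : ∀ x ∈ A + B, ∀ y ∈ A + B, r x y ∨ r y x) : MulGE r A B ∨ MulGE r B A := by
  induction hS : A + B using Multiset.strongInductionOn generalizing A B with
  | _ S ih =>
  rcases eq_or_ne B 0 with rfl | hB
  · exact .inl (.empty A)
  rcases eq_or_ne A 0 with rfl | hA
  · exact .inr (.empty B)
  obtain ⟨m, hm, hmax⟩ :=
    Multiset.exists_forall_rel_of_total (by simp [hA]) htot htr
  wlog hmA : m ∈ A generalizing A B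
  · rw [add_comm] at htot hm hmax hS
    exact (this htot hS hA hB hm hmax ((Multiset.mem_add.1 hm).resolve_right hmA)).symm
  by_cases hex : ∃ b ∈ B, r b m
  · obtain ⟨b, hb, hbm⟩ := hex
    have hmb := hmax b (Multiset.mem_add.2 (.inr hb))
    have hle : A.erase m + B.erase b ≤ A + B := add_le_add (A.erase_le m) (B.erase_le b)
    have hlt : A.erase m + B.erase b < S :=
      hS ▸ add_lt_add (Multiset.erase_lt.2 hmA) (Multiset.erase_lt.2 hb)
    rcases ih _ hlt (fun x hx y hy => htot x (Multiset.mem_of_le hle hx) y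
      (Multiset.mem_of_le hle hy)) rfl with h | h
    · exact .inl (.cancel m b hmA hb hmb hbm h)
    · exact .inr (.cancel b m hb hmA hbm hmb h)
  · simp only [not_exists, not_and] at hex
    exact .inl (mulGE_of_forall_strictF hmA fun b hb =>
      ⟨hmax b (Multiset.mem_add.2 (.inr hb)), hex b hb⟩)

theorem MulGE.cons_of_equivF (htr : ∀ x y z, r x y → r y z → r x z) {x y : α}
    {S U : Multiset α} (h : MulGE r (x ::ₘ S) U) (hxy : equivF r x y) : MulGE r (y ::ₘ S) U := by
  obtain ⟨T₁, T₂, U₁, U₂, hT, rfl, hrel, hdom⟩ := h.exists_decomp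
  have hx : x ∈ T₁ + T₂ := hT ▸ Multiset.mem_cons_self x S
  have hS : S = (T₁ + T₂).erase x := by rw [← hT, Multiset.erase_cons_head]
  rcases Multiset.mem_add.1 hx with hx | hx
  · obtain ⟨u, hu, hxu, hrel'⟩ := hrel.exists_erase_of_mem_left hx
    have hyu : equivF r y u := ⟨htr y x u hxy.2 hxu.1, htr u x y hxu.2 hxy.1⟩
    have := MulGEDecomp.mulGE ⟨hrel'.cons hyu, hdom⟩
    rwa [Multiset.cons_erase hu, Multiset.cons_add, ← Multiset.erase_add_left_pos _ hx,
      ← hS] at this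
  · suffices H : MulGEDecomp r T₁ (y ::ₘ T₂.erase x) U₁ U₂ by
      have := H.mulGE
      rwa [Multiset.add_cons, ← Multiset.erase_add_right_pos _ hx, ← hS] at this
    refine ⟨hrel, fun u hu => ?_⟩
    obtain ⟨t, ht, htu⟩ := hdom u hu
    by_cases htx : t = x
    · subst htx
      exact ⟨y, Multiset.mem_cons_self y _, htr y t u hxy.2 htu.1,
        fun huy => htu.2 (htr u y t huy hxy.2)⟩
    · exact ⟨t, Multiset.mem_cons_of_mem ((Multiset.mem_erase_of_ne htx).2 ht), htu⟩

theorem MulGE.erase_of_forall_rel (htr : ∀ x y z, r x y → r y z → r x z) {T U : Multiset α}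
    {a b : α} (h : MulGE r T U) (ha : a ∈ T) (hmax : ∀ t ∈ T, r a t) (hb : b ∈ U)
    (hba : r b a) : MulGE r (T.erase a) (U.erase b) := by
  obtain ⟨T₁, T₂, U₁, U₂, rfl, rfl, hrel, hdom⟩ := h.exists_decomp
  rcases Multiset.mem_add.1 hb with hb | hb
  · obtain ⟨a', ha', ha'b, hrel'⟩ := hrel.exists_erase_of_mem_right hb
    have h' := MulGEDecomp.mulGE ⟨hrel', hdom⟩
    rw [← Multiset.erase_add_left_pos _ ha', ← Multiset.erase_add_left_pos _ hb] at h'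
    rcases eq_or_ne a' a with rfl | hne
    · exact h'
    have ha'' : a ∈ (T₁ + T₂).erase a' := (Multiset.mem_erase_of_ne hne.symm).2 ha
    rw [← Multiset.cons_erase ha'', Multiset.erase_comm] at h'
    rw [← Multiset.cons_erase ((Multiset.mem_erase_of_ne hne).2
      (Multiset.mem_add.2 (.inl ha')))]
    exact h'.cons_of_equivF htr ⟨hmax a' (Multiset.mem_add.2 (.inl ha')), htr a' b a ha'b.1 hba⟩
  · obtain ⟨t, ht, htb⟩ := hdom b hb
    exact absurd (htr b a t hba (hmax t (Multiset.mem_add.2 (.inr ht)))) htb.2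

theorem rel_equivF_of_mulGE_of_mulGE (htot : ∀ x y, r x y ∨ r y x)
    (htr : ∀ x y z, r x y → r y z → r x z) {A B : Multiset α} (hAB : MulGE r A B)
    (hBA : MulGE r B A) : Multiset.Rel (equivF r) A B := by
  induction hS : A + B using Multiset.strongInductionOn generalizing A B with
  | _ S ih =>
  rcases eq_or_ne A 0 with rfl | hA
  · obtain rfl : B = 0 := Multiset.eq_zero_of_forall_notMem fun u hu => by
      simpa using hAB.exists_rel u hu
    exact .zero
  obtain ⟨m, hm, hmax⟩ :=
    Multiset.exists_forall_rel_of_total (M := A + B) (by simp [hA]) (fun x _ y _ => htot x y) htr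
  wlog hmA : m ∈ A generalizing A B
  · rw [add_comm] at hm hmax hS
    have hB : B ≠ 0 := by
      rintro rfl
      obtain ⟨a, ha⟩ := Multiset.exists_mem_of_ne_zero hA
      simpa using hBA.exists_rel a ha
    refine Multiset.rel_flip.1 ((this hBA hAB hS hB hm hmax
      ((Multiset.mem_add.1 hm).resolve_right hmA)).mono fun _ _ _ _ h => ⟨h.2, h.1⟩)
  obtain ⟨u, hu, hum⟩ := hBA.exists_rel m hmA
  have hmu := hmax u (Multiset.mem_add.2 (.inr hu))
  have hlt : A.erase m + B.erase u < S :=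
    hS ▸ add_lt_add (Multiset.erase_lt.2 hmA) (Multiset.erase_lt.2 hu)
  have hrel := ih _ hlt
    (hAB.erase_of_forall_rel htr hmA (fun t ht => hmax t (Multiset.mem_add.2 (.inl ht))) hu hum)
    (hBA.erase_of_forall_rel htr hu (fun t ht => htr u m t hum (hmax t (Multiset.mem_add.2
      (.inr ht)))) hmA hmu) rfl
  rw [← Multiset.cons_erase hmA, ← Multiset.cons_erase hu]
  exact hrel.cons ⟨hmu, hum⟩

end Total

namespace GTerm

variable {F : Type} {ar : F → ℕ}

def args : GTerm F ar → Multiset (GTerm F ar)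
  | mk _ ts => argsM ts

theorem mem_argsM {f : F} {ts : Fin (ar f) → GTerm F ar} {x : GTerm F ar} :
    x ∈ argsM ts ↔ ∃ i, ts i = x :=
  List.mem_ofFn

theorem tsize_mk (f : F) (ts : Fin (ar f) → GTerm F ar) :
    tsize (mk f ts) = 1 + ((argsM ts).map tsize).sum := by
  simp [tsize, argsM, List.sum_ofFn]

theorem tsize_pos (t : GTerm F ar) : 0 < tsize t := by
  cases t
  rw [tsize_mk]
  omega

theorem tsize_lt_of_mem_argsM {f : F} {ts : Fin (ar f) → GTerm F ar} {s : GTerm F ar}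
    (h : s ∈ argsM ts) : tsize s < tsize (mk f ts) := by
  rw [tsize_mk]
  have := Multiset.le_sum_of_mem (Multiset.mem_map_of_mem tsize h)
  omega

theorem tsize_lt_of_mem_args {s t : GTerm F ar} (h : s ∈ t.args) : tsize s < tsize t := by
  cases t
  exact tsize_lt_of_mem_argsM h

end GTerm

open GTerm

section Unfold

variable {F : Type} {ar : F → ℕ} (ge : F → F → Prop)

def RPQOStep (r : GTerm F ar → GTerm F ar → Prop) : GTerm F ar → GTerm F ar → Prop
  | mk f ts, mk g us =>
      (strictF ge f g ∧ MulGT r {mk f ts} (argsM us)) ∨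
      (strictF ge g f ∧ MulGE r (argsM ts) {mk g us}) ∨
      (equivF ge f g ∧ MulGE r (argsM ts) (argsM us))

theorem mulGE_congr_of_tsize {r r' : GTerm F ar → GTerm F ar → Prop} {N : ℕ}
    (h : ∀ x y, tsize x + tsize y < N → (r x y ↔ r' x y)) {T U : Multiset (GTerm F ar)}
    (hTU : ∀ x ∈ T, ∀ y ∈ U, tsize x + tsize y < N) : MulGE r T U ↔ MulGE r' T U :=
  mulGE_congr_iff fun x hx y hy =>
    ⟨h x y (hTU x hx y hy), h y x (add_comm (tsize x) (tsize y) ▸ hTU x hx y hy)⟩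

theorem rpqoStep_congr {r r' : GTerm F ar → GTerm F ar → Prop} {t u : GTerm F ar}
    (h : ∀ x y, tsize x + tsize y < tsize t + tsize u → (r x y ↔ r' x y)) :
    RPQOStep ge r t u ↔ RPQOStep ge r' t u := by
  obtain ⟨f, ts⟩ := t
  obtain ⟨g, us⟩ := u
  have hts : ∀ x ∈ argsM ts, tsize x < tsize (mk f ts) := fun _ => tsize_lt_of_mem_argsM
  have hus : ∀ y ∈ argsM us, tsize y < tsize (mk g us) := fun _ => tsize_lt_of_mem_argsM
  have h₁ := mulGE_congr_of_tsize h (T := {mk f ts}) (U := argsM us) (by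
    simpa using fun y hy => by linarith [hus y hy])
  have h₂ := mulGE_congr_of_tsize h (T := argsM us) (U := {mk f ts}) (by
    simpa using fun y hy => by linarith [hus y hy])
  have h₃ := mulGE_congr_of_tsize h (T := argsM ts) (U := {mk g us}) (by
    simpa using fun x hx => by linarith [hts x hx])
  have h₄ := mulGE_congr_of_tsize h (T := argsM ts) (U := argsM us) fun x hx y hy => by
    linarith [hts x hx, hus y hy]
  simp only [RPQOStep, MulGT, h₁, h₂, h₃, h₄]

theorem rpqof_succ (n : ℕ) (t u : GTerm F ar) :
    RPQOf ge (n + 1) t u = RPQOStep ge (RPQOf ge n) t u := by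
  cases t; cases u; rfl

theorem rpqof_iff_rpqo (n : ℕ) (t u : GTerm F ar) (h : tsize t + tsize u ≤ n) :
    RPQOf ge n t u ↔ RPQO ge t u := by
  induction n using Nat.strong_induction_on generalizing t u with
  | _ n ih =>
  have := tsize_pos t
  obtain ⟨k, rfl⟩ : ∃ k, n = k + 1 := ⟨n - 1, by omega⟩
  obtain ⟨m, hm⟩ : ∃ m, tsize t + tsize u = m + 1 := ⟨tsize t + tsize u - 1, by omega⟩
  rw [RPQO, hm, rpqof_succ, rpqof_succ,
    rpqoStep_congr ge fun x y hxy => ih k (lt_add_one k) x y (by omega),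
    rpqoStep_congr ge fun x y hxy => ih m (by omega) x y (by omega)]

theorem rpqo_iff_rpqoStep (t u : GTerm F ar) : RPQO ge t u ↔ RPQOStep ge (RPQO ge) t u := by
  have := tsize_pos t
  obtain ⟨m, hm⟩ : ∃ m, tsize t + tsize u = m + 1 := ⟨tsize t + tsize u - 1, by omega⟩
  rw [RPQO, hm, rpqof_succ]
  exact rpqoStep_congr ge fun x y hxy => rpqof_iff_rpqo ge m x y (by omega)

theorem rpqo_mk_iff {f g : F} (ts : Fin (ar f) → GTerm F ar) (us : Fin (ar g) → GTerm F ar) :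
    RPQO ge (mk f ts) (mk g us) ↔
      (strictF ge f g ∧ ∀ u ∈ argsM us, strictF (RPQO ge) (mk f ts) u) ∨
      (strictF ge g f ∧ ∃ t ∈ argsM ts, RPQO ge t (mk g us)) ∨
      (equivF ge f g ∧ MulGE (RPQO ge) (argsM ts) (argsM us)) := by
  rw [rpqo_iff_rpqoStep, RPQOStep, mulGT_singleton_left_iff, mulGE_singleton_right_iff]

theorem RPQO.refl (hrefl : ∀ f, ge f f) (t : GTerm F ar) : RPQO ge t t := by
  induction t with
  | mk f ts ih =>
    refine (rpqo_mk_iff ge ts ts).2 (.inr (.inr ⟨⟨hrefl f, hrefl f⟩, mulGE_refl fun x hx => ?_⟩))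
    obtain ⟨i, rfl⟩ := mem_argsM.1 hx
    exact ih i

end Unfold

theorem strictF_or_strictF_or_equivF {α : Type} {r : α → α → Prop}
    (htot : ∀ x y, r x y ∨ r y x) (x y : α) : strictF r x y ∨ strictF r y x ∨ equivF r x y := by
  by_cases hxy : r x y <;> by_cases hyx : r y x
  · exact .inr (.inr ⟨hxy, hyx⟩)
  · exact .inl ⟨hxy, hyx⟩
  · exact .inr (.inl ⟨hyx, hxy⟩)
  · exact absurd (htot x y) (by tauto)

section Args

variable {F : Type} {ar : F → ℕ} {ge : F → F → Prop}

def SubtermProps (ge : F → F → Prop) (a b : GTerm F ar) : Prop :=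
  (RPQO ge a b → ∀ u ∈ b.args, RPQO ge a u) ∧
  (∀ s ∈ a.args, RPQO ge s b → RPQO ge a b) ∧
  (∀ v ∈ a.args, RPQO ge v b → ¬ RPQO ge b a)

namespace SubtermProps

variable {a b : GTerm F ar}
  (IH : ∀ x y : GTerm F ar, tsize x + tsize y < tsize a + tsize b → SubtermProps ge x y)
include IH

theorem step_trans_mem_args (hab : RPQO ge a b) {u : GTerm F ar} (hu : u ∈ b.args) :
    RPQO ge a u := by
  obtain ⟨p, xs⟩ := a
  obtain ⟨q, ys⟩ := b
  have hu' := tsize_lt_of_mem_argsM hu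
  rcases (rpqo_mk_iff ge xs ys).1 hab with ⟨_, hgt⟩ | ⟨_, t, ht, htb⟩ | ⟨_, hmul⟩
  · exact (hgt u hu).1
  · have ht' := tsize_lt_of_mem_argsM ht
    exact (IH _ u (by omega)).2.1 t ht ((IH t _ (by omega)).1 htb u hu)
  · obtain ⟨t, ht, htu⟩ := hmul.exists_rel u hu
    exact (IH _ u (by omega)).2.1 t ht htu

theorem step_of_mem_args (htotal : ∀ f g, ge f g ∨ ge g f) {s : GTerm F ar} (hs : s ∈ a.args)
    (hsb : RPQO ge s b) : RPQO ge a b := by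
  obtain ⟨f, as⟩ := a
  obtain ⟨k, ws⟩ := b
  have hs' := tsize_lt_of_mem_argsM hs
  have hsx : ∀ x ∈ argsM ws, strictF (RPQO ge) s x := fun x hx => by
    have hx' := tsize_lt_of_mem_argsM hx
    exact ⟨(IH s _ (by omega)).1 hsb x hx, fun hxs => (IH (mk k ws) s (by omega)).2.2 x hx hxs hsb⟩
  rcases strictF_or_strictF_or_equivF htotal f k with hfk | hkf | hfk
  · refine (rpqo_mk_iff ge as ws).2 (.inl ⟨hfk, fun x hx => ?_⟩)
    have hx' := tsize_lt_of_mem_argsM hx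
    exact ⟨(IH _ x (by omega)).2.1 s hs (hsx x hx).1, (IH _ x (by omega)).2.2 s hs (hsx x hx).1⟩
  · exact (rpqo_mk_iff ge as ws).2 (.inr (.inl ⟨hkf, s, hs, hsb⟩))
  · exact (rpqo_mk_iff ge as ws).2 (.inr (.inr ⟨hfk, mulGE_of_forall_strictF hs hsx⟩))

theorem step_not_rpqo {v : GTerm F ar} (hv : v ∈ a.args) (hvb : RPQO ge v b) :
    ¬ RPQO ge b a := by
  intro hba
  obtain ⟨m, ss⟩ := a
  obtain ⟨p, xs⟩ := b
  have hv' := tsize_lt_of_mem_argsM hv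
  rcases (rpqo_mk_iff ge xs ss).1 hba with ⟨_, hgt⟩ | ⟨_, t, ht, hta⟩ | ⟨_, hmul⟩
  · exact (hgt v hv).2 hvb
  · have ht' := tsize_lt_of_mem_argsM ht
    exact (IH (mk p xs) v (by omega)).2.2 t ht ((IH t _ (by omega)).1 hta v hv) hvb
  · obtain ⟨t, ht, htv⟩ := hmul.exists_rel v hv
    exact (IH (mk p xs) v (by omega)).2.2 t ht htv hvb

end SubtermProps

theorem subtermProps (htotal : ∀ f g, ge f g ∨ ge g f) (a b : GTerm F ar) :
    SubtermProps ge a b := by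
  induction h : tsize a + tsize b using Nat.strong_induction_on generalizing a b with
  | _ n ih =>
  subst h
  have IH := fun x y hxy => ih _ hxy x y rfl
  exact ⟨fun hab _ hu => SubtermProps.step_trans_mem_args IH hab hu,
    fun _ hs hsb => SubtermProps.step_of_mem_args IH htotal hs hsb,
    fun _ hv hvb => SubtermProps.step_not_rpqo IH hv hvb⟩

variable (htotal : ∀ f g, ge f g ∨ ge g f)
include htotal

theorem RPQO.trans_mem_args {a b u : GTerm F ar} (h : RPQO ge a b) (hu : u ∈ b.args) :
    RPQO ge a u :=
  (subtermProps htotal a b).1 h u hu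

theorem RPQO.of_mem_args {a b s : GTerm F ar} (hs : s ∈ a.args) (h : RPQO ge s b) :
    RPQO ge a b :=
  (subtermProps htotal a b).2.1 s hs h

theorem RPQO.not_rpqo_of_mem_args {a b v : GTerm F ar} (hv : v ∈ a.args) (h : RPQO ge v b) :
    ¬ RPQO ge b a :=
  (subtermProps htotal a b).2.2 v hv h

end Args

section Trans

variable {F : Type} {ar : F → ℕ} {ge : F → F → Prop}

theorem transAcross_args {a b c : GTerm F ar}
    (IH : ∀ x y z : GTerm F ar, tsize x + tsize y + tsize z < tsize a + tsize b + tsize c →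
      RPQO ge x y → RPQO ge y z → RPQO ge x z) :
    TransAcross (RPQO ge) a.args b.args c.args := by
  intro x hx y hy z hz x' y' z' hperm
  have hsum := congrArg (fun M => (M.map tsize).sum) hperm
  simp only [Multiset.insert_eq_cons, Multiset.map_cons, Multiset.sum_cons,
    Multiset.map_singleton, Multiset.sum_singleton] at hsum
  have := tsize_lt_of_mem_args hx
  have := tsize_lt_of_mem_args hy
  have := tsize_lt_of_mem_args hz
  exact IH x' y' z' (by omega)

variable (htotal : ∀ f g, ge f g ∨ ge g f) (htrans : ∀ f g h, ge f g → ge g h → ge f h)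
include htotal htrans

theorem rpqo_trans_step {a b c : GTerm F ar}
    (IH : ∀ x y z : GTerm F ar, tsize x + tsize y + tsize z < tsize a + tsize b + tsize c →
      RPQO ge x y → RPQO ge y z → RPQO ge x z)
    (hab : RPQO ge a b) (hbc : RPQO ge b c) : RPQO ge a c := by
  have hprec {f g k : F} : TransOnTriple ge f g k := transOnTriple_of_trans htrans
  obtain ⟨f, as⟩ := a
  obtain ⟨g, bs⟩ := b
  obtain ⟨k, cs⟩ := c
  have hstrict (hgt : ∀ w ∈ argsM cs, strictF (RPQO ge) (mk g bs) w) :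
      ∀ w ∈ argsM cs, strictF (RPQO ge) (mk f as) w := fun w hw => by
    have := tsize_lt_of_mem_argsM hw
    exact ⟨IH _ _ w (by omega) hab (hgt w hw).1,
      fun hwa => (hgt w hw).2 (IH w _ _ (by omega) hwa hab)⟩
  have hviaB {t : GTerm F ar} (ht : t ∈ argsM bs) (htc : RPQO ge t (mk k cs)) :
      RPQO ge (mk f as) (mk k cs) := by
    have := tsize_lt_of_mem_argsM ht
    exact IH _ t _ (by omega) (hab.trans_mem_args htotal ht) htc
  rcases (rpqo_mk_iff ge as bs).1 hab with ⟨hfg, hgt⟩ | ⟨_, s, hs, hsb⟩ | ⟨hfg, hmul⟩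
  · rcases (rpqo_mk_iff ge bs cs).1 hbc with ⟨hgk, hgt'⟩ | ⟨_, t, ht, htc⟩ | ⟨hgk, hmul'⟩
    · exact (rpqo_mk_iff ge as cs).2
        (.inl ⟨hprec.strictF_of_strictF_of_rel hfg hgk.1, hstrict hgt'⟩)
    · exact hviaB ht htc
    · refine (rpqo_mk_iff ge as cs).2
        (.inl ⟨hprec.strictF_of_strictF_of_rel hfg hgk.1, fun w hw => ?_⟩)
      obtain ⟨t, ht, htw⟩ := hmul'.exists_rel w hw
      have := tsize_lt_of_mem_argsM hw
      have := tsize_lt_of_mem_argsM ht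
      exact ⟨IH _ t w (by omega) (hgt t ht).1 htw,
        fun hwa => (hgt t ht).2 (IH t w _ (by omega) htw hwa)⟩
  · have := tsize_lt_of_mem_argsM hs
    exact RPQO.of_mem_args htotal hs (IH s _ _ (by omega) hsb hbc)
  · rcases (rpqo_mk_iff ge bs cs).1 hbc with ⟨hgk, hgt'⟩ | ⟨_, t, ht, htc⟩ | ⟨hgk, hmul'⟩
    · exact (rpqo_mk_iff ge as cs).2
        (.inl ⟨hprec.strictF_of_rel_of_strictF hfg.1 hgk, hstrict hgt'⟩)
    · exact hviaB ht htc
    · exact (rpqo_mk_iff ge as cs).2 (.inr (.inr ⟨hprec.equivF_trans hfg hgk,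
        hmul.trans hmul' (transAcross_args (a := mk f as) (b := mk g bs) (c := mk k cs) IH)⟩))

theorem RPQO.trans {a b c : GTerm F ar} (hab : RPQO ge a b) (hbc : RPQO ge b c) :
    RPQO ge a c := by
  induction h : tsize a + tsize b + tsize c using Nat.strong_induction_on generalizing a b c with
  | _ n ih =>
  subst h
  exact rpqo_trans_step htotal htrans (fun _ _ _ hxyz hxy hyz => ih _ hxyz hxy hyz rfl) hab hbc

end Trans

section Total

variable {F : Type} {ar : F → ℕ} {ge : F → F → Prop}

theorem Multiset.add_le_sum_map_of_ne {α : Type} (f : α → ℕ) {S : Multiset α} {x y : α}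
    (hx : x ∈ S) (hy : y ∈ S) (hne : x ≠ y) : f x + f y ≤ (S.map f).sum := by
  rw [← Multiset.sum_map_erase hx]
  exact Nat.add_le_add_left (Multiset.le_sum_of_mem
    (Multiset.mem_map_of_mem f ((Multiset.mem_erase_of_ne hne.symm).2 hy))) _

variable (hrefl : ∀ f, ge f f) (htotal : ∀ f g, ge f g ∨ ge g f)
  (htrans : ∀ f g h, ge f g → ge g h → ge f h)

include htotal in
theorem forall_strictF_or_rpqo {a b : GTerm F ar}
    (IH : ∀ x y : GTerm F ar, tsize x + tsize y < tsize a + tsize b → RPQO ge x y ∨ RPQO ge y x) :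
    (∀ u ∈ b.args, strictF (RPQO ge) a u) ∨ RPQO ge b a := by
  by_contra! h
  obtain ⟨⟨u, hu, hau⟩, hba⟩ := h
  have := tsize_lt_of_mem_args hu
  have hua : RPQO ge u a := (IH u a (by omega)).elim id fun hau' => not_not.1 fun h => hau ⟨hau', h⟩
  exact hba (RPQO.of_mem_args htotal hu hua)

include hrefl htotal htrans in
theorem rpqo_total_step {a b : GTerm F ar}
    (IH : ∀ x y : GTerm F ar, tsize x + tsize y < tsize a + tsize b → RPQO ge x y ∨ RPQO ge y x) :
    RPQO ge a b ∨ RPQO ge b a := by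
  obtain ⟨f, as⟩ := a
  obtain ⟨g, bs⟩ := b
  rcases strictF_or_strictF_or_equivF htotal f g with hfg | hgf | hfg
  · exact (forall_strictF_or_rpqo htotal IH).imp_left fun h =>
      (rpqo_mk_iff ge as bs).2 (.inl ⟨hfg, h⟩)
  · exact ((forall_strictF_or_rpqo (a := mk g bs) (b := mk f as) htotal
      fun x y h => (IH y x (by omega)).symm).imp_left
      fun h => (rpqo_mk_iff ge bs as).2 (.inl ⟨hgf, h⟩)).symm
  · have htot : ∀ x ∈ argsM as + argsM bs, ∀ y ∈ argsM as + argsM bs,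
        RPQO ge x y ∨ RPQO ge y x := by
      intro x hx y hy
      rcases eq_or_ne x y with rfl | hne
      · exact .inl (RPQO.refl ge hrefl x)
      have := Multiset.add_le_sum_map_of_ne tsize hx hy hne
      rw [Multiset.map_add, Multiset.sum_add] at this
      have := tsize_mk f as
      have := tsize_mk g bs
      exact IH x y (by omega)
    exact (mulGE_or_mulGE (r := RPQO ge) (fun _ _ _ => RPQO.trans htotal htrans) htot).imp
      (fun h => (rpqo_mk_iff ge as bs).2 (.inr (.inr ⟨hfg, h⟩)))
      (fun h => (rpqo_mk_iff ge bs as).2 (.inr (.inr ⟨⟨hfg.2, hfg.1⟩, h⟩)))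

include hrefl htotal htrans in
theorem RPQO.total (a b : GTerm F ar) : RPQO ge a b ∨ RPQO ge b a := by
  induction h : tsize a + tsize b using Nat.strong_induction_on generalizing a b with
  | _ n ih =>
  subst h
  exact rpqo_total_step hrefl htotal htrans fun x y hxy => ih _ hxy x y rfl

end Total

section Thin

variable {F : Type} {ar : F → ℕ} {ge : F → F → Prop}

theorem mulGE_argsM_of_equivF (htotal : ∀ f g, ge f g ∨ ge g f) {f g : F}
    {ts : Fin (ar f) → GTerm F ar} {us : Fin (ar g) → GTerm F ar}
    (h : equivF (RPQO ge) (mk f ts) (mk g us)) : MulGE (RPQO ge) (argsM ts) (argsM us) := by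
  rcases (rpqo_mk_iff ge ts us).1 h.1 with ⟨hfg, -⟩ | ⟨_, t, ht, htu⟩ | ⟨_, hmul⟩
  · rcases (rpqo_mk_iff ge us ts).1 h.2 with ⟨hgf, -⟩ | ⟨_, u, hu, hut⟩ | ⟨hgf, -⟩
    · exact absurd hgf.1 hfg.2
    · exact absurd h.1 (RPQO.not_rpqo_of_mem_args htotal hu hut)
    · exact absurd hgf.1 hfg.2
  · exact absurd h.2 (RPQO.not_rpqo_of_mem_args htotal ht htu)
  · exact hmul

variable (hrefl : ∀ f, ge f f) (htrans : ∀ f g h, ge f g → ge g h → ge f h)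
  (htotal : ∀ f g, ge f g ∨ ge g f)
include hrefl htrans htotal

theorem exists_equivF_mem_args {g : F} {us : Fin (ar g) → GTerm F ar} {t : GTerm F ar}
    (h : equivF (RPQO ge) (mk g us) t) : ∀ u ∈ argsM us, ∃ s ∈ t.args, equivF (RPQO ge) u s := by
  obtain ⟨f, ts⟩ := t
  exact fun u hu => Multiset.exists_mem_of_rel_of_mem (rel_equivF_of_mulGE_of_mulGE
    (RPQO.total hrefl htotal htrans) (fun _ _ _ => RPQO.trans htotal htrans)
    (mulGE_argsM_of_equivF htotal h) (mulGE_argsM_of_equivF htotal ⟨h.2, h.1⟩)) hu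

theorem finite_setOf_equivF_rpqo [Finite F] (t : GTerm F ar) :
    {u | equivF (RPQO ge) u t}.Finite := by
  induction t with
  | mk f ts ih =>
  set K := ⋃ i, {x | equivF (RPQO ge) x (ts i)}
  have : Finite K := (Set.finite_iUnion ih).to_subtype
  refine (Set.finite_range fun p : Σ g, Fin (ar g) → K => mk p.1 fun i => (p.2 i).1).subset ?_
  rintro ⟨g, us⟩ hu
  have hK : ∀ i, us i ∈ K := fun i => by
    obtain ⟨s, hs, hus⟩ :=
      exists_equivF_mem_args hrefl htrans htotal hu (us i) (mem_argsM.2 ⟨i, rfl⟩)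
    obtain ⟨j, rfl⟩ := mem_argsM.1 hs
    exact Set.mem_iUnion.2 ⟨j, hus⟩
  exact ⟨⟨g, fun i => ⟨us i, hK i⟩⟩, rfl⟩

end Thin

theorem stmt_10_general {F : Type} [Fintype F] (ar : F → ℕ) (ge : F → F → Prop)
    (hrefl : ∀ f, ge f f) (htrans : ∀ f g h, ge f g → ge g h → ge f h)
    (htotal : ∀ f g, ge f g ∨ ge g f)
    (t : GTerm F ar) :
    {u : GTerm F ar | RPQO ge u t ∧ RPQO ge t u}.Finite :=
  finite_setOf_equivF_rpqo hrefl htrans htotal t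

/-- If the precedence on a finite set of function symbols is a total
well-quasi-ordering, then the derived recursive path quasi-ordering is thin:
every equivalence class of ground terms is finite. -/
theorem stmt_10 {F : Type} [Fintype F] (ar : F → ℕ) (ge : F → F → Prop)
    (hrefl : ∀ f, ge f f) (htrans : ∀ f g h, ge f g → ge g h → ge f h)
    (htotal : ∀ f g, ge f g ∨ ge g f)
    (hwqo : ∀ s : ℕ → F, ∃ i j : ℕ, i < j ∧ ge (s j) (s i))
    (t : GTerm F ar) :
    {u : GTerm F ar | RPQO ge u t ∧ RPQO ge t u}.Finite :=
  stmt_10_general ar ge hrefl htrans htotal t
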